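/- arXiv:1111.5075 — 2 statements merged into one kernel-verified Lean document; each statement's English description precedes it below -/
import Mathlib

section
/- Let w be a nonnegative locally integrable function on ℝⁿ and 0 < p < 1. Suppose {f_j}_{j∈ℤ} is a sequence of measurable functions on ℝⁿ satisfying w({x ∈ ℝⁿ : |f_j(x)| > α}) ≤ α^{−p} for all α > 0 and all j ∈ ℤ, and {λ_j}_{j∈ℤ} are real numbers with Σ_j |λ_j|^p ≤ 1. Then the series Σ_j λ_j f_j(x) converges absolutely for w-almost every x, and w({x ∈ ℝⁿ : |Σ_j λ_j f_j(x)| > α}) ≤ ((2−p)/(1−p))·α^{−p} for all α > 0. -/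
open MeasureTheory Metric Set ENNReal
open scoped Classical

noncomputable section

abbrev Rn (n : ℕ) : Type := EuclideanSpace ℝ (Fin n)

/-- Axis-parallel cube centered at `c` with side length `r`. -/
def cube {n : ℕ} (c : Rn n) (r : ℝ) : Set (Rn n) := {x | ∀ i, |x i - c i| ≤ r / 2}

/-- The measure `w(E) = ∫_E w` with density `w` w.r.t. Lebesgue measure. -/
def wm {n : ℕ} (w : Rn n → ℝ) : Measure (Rn n) :=
  volume.withDensity (fun x => ENNReal.ofReal (w x))

/-- Muckenhoupt `A_q` condition for `q > 1`. -/
def IsAq {n : ℕ} (w : Rn n → ℝ) (q : ℝ) : Prop :=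
  (∀ x, 0 ≤ w x) ∧ LocallyIntegrable w volume ∧
  ∃ C > 0, ∀ (c : Rn n) (r : ℝ), 0 < r →
    (((volume (cube c r)).toReal⁻¹ * ∫ x in cube c r, w x) *
      (((volume (cube c r)).toReal⁻¹ * ∫ x in cube c r, w x ^ (-1 / (q - 1))) ^ (q - 1))) ≤ C

/-- Muckenhoupt `A_1` condition. -/
def IsA1 {n : ℕ} (w : Rn n → ℝ) : Prop :=
  (∀ x, 0 ≤ w x) ∧ LocallyIntegrable w volume ∧
  ∃ C > 0, ∀ (c : Rn n) (r : ℝ), 0 < r →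
    ∀ᵐ y ∂(volume.restrict (cube c r)),
      (volume (cube c r)).toReal⁻¹ * ∫ x in cube c r, w x ≤ C * w y

/-- Muckenhoupt `A_q` condition for `q ≥ 1`. -/
def IsMuckenhoupt {n : ℕ} (w : Rn n → ℝ) (q : ℝ) : Prop :=
  if q = 1 then IsA1 w else IsAq w q

/-- The parametric Marcinkiewicz integral `μ^ρ_Ω`. -/
def marc {n : ℕ} (ρ : ℝ) (Ω f : Rn n → ℝ) (x : Rn n) : ℝ :=
  (∫ t in Ioi (0:ℝ),
      (∫ y in {y : Rn n | dist x y ≤ t}, Ω (x - y) * ‖x - y‖ ^ (ρ - (n:ℝ)) * f y) ^ 2 *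
        t ^ (-(2 * ρ + 1))) ^ ((1:ℝ)/2)

/-- `Ω` is homogeneous of degree zero. -/
def HomZero {n : ℕ} (Ω : Rn n → ℝ) : Prop :=
  ∀ t : ℝ, 0 < t → ∀ x : Rn n, x ≠ 0 → Ω (t • x) = Ω x

/-- `Ω` has mean value zero on the unit sphere `S^{n-1}`. -/
def MeanZero {n : ℕ} (Ω : Rn n → ℝ) : Prop :=
  ∫ x : Metric.sphere (0 : Rn n) 1, Ω (x : Rn n) ∂((volume : Measure (Rn n)).toSphere) = 0

/-- `Ω ∈ Lip_α(S^{n-1})` with Lipschitz constant `L`. -/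
def LipSphere {n : ℕ} (Ω : Rn n → ℝ) (α L : ℝ) : Prop :=
  ∀ x y : Rn n, ‖x‖ = 1 → ‖y‖ = 1 → |Ω x - Ω y| ≤ L * ‖x - y‖ ^ α

/-- `a` is a `w`-`(p,q,0)`-atom supported in the cube `Q(x₀, r)`. -/
def IsAtomOn {n : ℕ} (w : Rn n → ℝ) (p q : ℝ) (a : Rn n → ℝ) (x₀ : Rn n) (r : ℝ) : Prop :=
  Measurable a ∧ Integrable a volume ∧
  (∀ x, x ∉ cube x₀ r → a x = 0) ∧
  (∫ x in cube x₀ r, |a x| ^ q * w x) ^ (1/q) ≤ (∫ x in cube x₀ r, w x) ^ (1/q - 1/p) ∧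
  (∫ x, a x) = 0

/-- `a` is a `w`-`(p,q,0)`-atom. -/
def IsWAtom {n : ℕ} (w : Rn n → ℝ) (p q : ℝ) (a : Rn n → ℝ) : Prop :=
  ∃ (x₀ : Rn n) (r : ℝ), 0 < r ∧ IsAtomOn w p q a x₀ r

/-- The weighted `L^p` (quasi-)norm `‖f‖_{L^p_w} = (∫ |f|^p w)^{1/p}`. -/
def wLp {n : ℕ} (w : Rn n → ℝ) (p : ℝ) (f : Rn n → ℝ) : ℝ≥0∞ :=
  (∫⁻ x, ENNReal.ofReal (|f x| ^ p * w x)) ^ (1/p)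


/-! Split each `λⱼ fⱼ` at height `α`. The set where some `|λⱼ fⱼ| > α` has measure at most
`∑ |λⱼ|^p α^{-p} ≤ α^{-p}`. On the truncated parts, the layer cake formula turns the weak type bound
into `∫_{|λⱼ fⱼ| ≤ α} |λⱼ fⱼ| ≤ |λⱼ|^p α^{1-p} / (1 - p)`, since `p < 1` makes `s^{-p}` integrable
at `0`; summing and applying Chebyshev's inequality gives the bound `α^{-p} / (1 - p)` for the
rest. Letting `α → ∞` shows that `∑ |λⱼ fⱼ|` is finite almost everywhere. -/

section WeakLp

variable {X : Type*} [MeasurableSpace X] {μ : Measure X} {p : ℝ}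

open Filter Topology

def WeakLpBound (μ : Measure X) (p : ℝ) (C : ℝ≥0∞) (f : X → ℝ) : Prop :=
  ∀ s : ℝ, 0 < s → μ {x | s < |f x|} ≤ C * ENNReal.ofReal (s ^ (-p))

theorem WeakLpBound.const_mul {C : ℝ≥0∞} {f : X → ℝ} (hf : WeakLpBound μ p C f) (c : ℝ) :
    WeakLpBound μ p (ENNReal.ofReal (|c| ^ p) * C) (fun x => c * f x) := by
  intro s hs
  rcases eq_or_ne c 0 with rfl | hc
  · simp [not_lt_of_gt hs]
  have hc' : 0 < |c| := abs_pos.2 hc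
  have hset : {x | s < |c * f x|} = {x | s / |c| < |f x|} := by
    ext x
    change s < |c * f x| ↔ s / |c| < |f x|
    rw [abs_mul, div_lt_iff₀' hc']
  calc μ {x | s < |c * f x|} ≤ C * ENNReal.ofReal ((s / |c|) ^ (-p)) := hset ▸ hf _ (by positivity)
    _ = ENNReal.ofReal (|c| ^ p) * C * ENNReal.ofReal (s ^ (-p)) := by
      rw [Real.div_rpow hs.le hc'.le, Real.rpow_neg hc'.le, div_eq_mul_inv, inv_inv,
        ENNReal.ofReal_mul (by positivity)]
      ring

theorem lintegral_Ioc_rpow_neg (hp1 : p < 1) {t : ℝ} (ht : 0 ≤ t) :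
    ∫⁻ s in Ioc 0 t, ENNReal.ofReal (s ^ (-p)) = ENNReal.ofReal (t ^ (1 - p) / (1 - p)) := by
  have hint : IntegrableOn (fun s : ℝ => s ^ (-p)) (Ioc 0 t) := by
    rw [← intervalIntegrable_iff_integrableOn_Ioc_of_le ht]
    exact intervalIntegral.intervalIntegrable_rpow' (by linarith)
  rw [← ofReal_integral_eq_lintegral_ofReal hint
    ((ae_restrict_iff' measurableSet_Ioc).2 (ae_of_all _ fun s hs => Real.rpow_nonneg hs.1.le _)),
    ← intervalIntegral.integral_of_le ht, integral_rpow (Or.inl (by linarith)),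
    Real.zero_rpow (by linarith)]
  ring_nf

theorem WeakLpBound.setLIntegral_abs_le_le {C : ℝ≥0∞} {f : X → ℝ} (hf : WeakLpBound μ p C f)
    (hp1 : p < 1) (hfm : Measurable f) {t : ℝ} (ht : 0 < t) :
    ∫⁻ x in {x | |f x| ≤ t}, ‖f x‖ₑ ∂μ ≤ C * ENNReal.ofReal (t ^ (1 - p) / (1 - p)) := by
  set S := {x | |f x| ≤ t}
  have hS : MeasurableSet S := measurableSet_le hfm.abs measurable_const
  have hlevel : ∀ s ∈ Ioi (0 : ℝ), μ.restrict S {x | s < |f x|} ≤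
      (Ioc 0 t).indicator (fun s => C * ENNReal.ofReal (s ^ (-p))) s := by
    intro s hs
    rw [Measure.restrict_apply' hS]
    by_cases hst : s ≤ t
    · rw [indicator_of_mem (show s ∈ Ioc 0 t from ⟨hs, hst⟩)]
      exact (measure_mono inter_subset_left).trans (hf s hs)
    · have hempty : {x | s < |f x|} ∩ S = ∅ :=
        eq_empty_of_forall_notMem fun x hx => hst (hx.1.le.trans hx.2)
      simp [hempty]
  calc ∫⁻ x in S, ‖f x‖ₑ ∂μ = ∫⁻ s in Ioi 0, μ.restrict S {x | s < |f x|} := by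
        simp_rw [Real.enorm_eq_ofReal_abs]
        exact lintegral_eq_lintegral_meas_lt _ (ae_of_all _ fun x => abs_nonneg _)
          hfm.abs.aemeasurable
    _ ≤ ∫⁻ s in Ioi 0, (Ioc 0 t).indicator (fun s => C * ENNReal.ofReal (s ^ (-p))) s :=
        setLIntegral_mono' measurableSet_Ioi hlevel
    _ = C * ENNReal.ofReal (t ^ (1 - p) / (1 - p)) := by
      rw [lintegral_indicator measurableSet_Ioc, Measure.restrict_restrict measurableSet_Ioc,
        Ioc_inter_Ioi, sup_of_le_left le_rfl, lintegral_const_mul _ (by fun_prop),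
        lintegral_Ioc_rpow_neg hp1 ht.le]

theorem measure_ofReal_lt_tsum_enorm_le {ι : Type*} [Countable ι] {g : ι → X → ℝ}
    {C : ι → ℝ≥0∞} (hg : ∀ j, WeakLpBound μ p (C j) (g j)) (hgm : ∀ j, Measurable (g j))
    (hp1 : p < 1) {α : ℝ} (hα : 0 < α) :
    μ {x | ENNReal.ofReal α < ∑' j, ‖g j x‖ₑ} ≤
      (∑' j, C j) * ENNReal.ofReal ((2 - p) / (1 - p) * α ^ (-p)) := by
  have h1p : 0 < 1 - p := by linarith
  set small : ι → X → ℝ≥0∞ := fun j => {x | |g j x| ≤ α}.indicator fun x => ‖g j x‖ₑ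
  have hS : ∀ j, MeasurableSet {x | |g j x| ≤ α} := fun j =>
    measurableSet_le (hgm j).abs measurable_const
  have hsmall_m : ∀ j, Measurable (small j) := fun j => (hgm j).enorm.indicator (hS j)
  have hcover : {x | ENNReal.ofReal α < ∑' j, ‖g j x‖ₑ} ⊆
      (⋃ j, {x | α < |g j x|}) ∪ {x | ENNReal.ofReal α ≤ ∑' j, small j x} := by
    intro x hx
    by_cases hlarge : ∃ j, α < |g j x|
    · exact Or.inl (mem_iUnion.2 hlarge)
    · push Not at hlarge
      have hsum : ∑' j, small j x = ∑' j, ‖g j x‖ₑ :=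
        tsum_congr fun j => indicator_of_mem (show x ∈ {x | |g j x| ≤ α} from hlarge j) _
      refine Or.inr (show ENNReal.ofReal α ≤ _ from ?_)
      exact hsum ▸ hx.le
  have hlarge : μ (⋃ j, {x | α < |g j x|}) ≤ (∑' j, C j) * ENNReal.ofReal (α ^ (-p)) :=
    (measure_iUnion_le _).trans
      ((ENNReal.tsum_le_tsum fun j => hg j α hα).trans_eq ENNReal.tsum_mul_right)
  have hsmall : μ {x | ENNReal.ofReal α ≤ ∑' j, small j x} ≤
      (∑' j, C j) * ENNReal.ofReal (α ^ (1 - p) / (1 - p)) / ENNReal.ofReal α := by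
    refine (meas_ge_le_lintegral_div (Measurable.tsum hsmall_m).aemeasurable
      (ENNReal.ofReal_pos.2 hα).ne' ENNReal.ofReal_ne_top).trans (ENNReal.div_le_div_right ?_ _)
    rw [lintegral_tsum fun j => (hsmall_m j).aemeasurable]
    simp_rw [small, lintegral_indicator (hS _)]
    exact (ENNReal.tsum_le_tsum fun j => (hg j).setLIntegral_abs_le_le hp1 (hgm j) hα).trans_eq
      ENNReal.tsum_mul_right
  have hconst : α ^ (-p) + α ^ (1 - p) / (1 - p) / α = (2 - p) / (1 - p) * α ^ (-p) := by
    rw [Real.rpow_sub hα, Real.rpow_one, Real.rpow_neg hα.le]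
    field_simp
    ring
  calc μ {x | ENNReal.ofReal α < ∑' j, ‖g j x‖ₑ}
      ≤ μ (⋃ j, {x | α < |g j x|}) + μ {x | ENNReal.ofReal α ≤ ∑' j, small j x} :=
        (measure_mono hcover).trans (measure_union_le _ _)
    _ ≤ (∑' j, C j) * ENNReal.ofReal (α ^ (-p)) +
        (∑' j, C j) * ENNReal.ofReal (α ^ (1 - p) / (1 - p)) / ENNReal.ofReal α :=
        add_le_add hlarge hsmall
    _ = (∑' j, C j) * ENNReal.ofReal ((2 - p) / (1 - p) * α ^ (-p)) := by
      rw [mul_div_assoc, ← mul_add, ← ENNReal.ofReal_div_of_pos hα,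
        ← ENNReal.ofReal_add (by positivity) (by positivity),
        hconst]

theorem ae_ne_top_of_measure_ofReal_lt_le {F : X → ℝ≥0∞} {K : ℝ} (hp0 : 0 < p)
    (hF : ∀ α : ℝ, 0 < α → μ {x | ENNReal.ofReal α < F x} ≤ ENNReal.ofReal (K * α ^ (-p))) :
    ∀ᵐ x ∂μ, F x ≠ ∞ := by
  have hbound : ∀ α : ℝ, 0 < α → μ {x | ¬F x ≠ ∞} ≤ ENNReal.ofReal (K * α ^ (-p)) :=
    fun α hα => (measure_mono fun x (hx : ¬F x ≠ ∞) =>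
      show ENNReal.ofReal α < F x from not_not.1 hx ▸ ENNReal.ofReal_lt_top).trans (hF α hα)
  have hlim : Tendsto (fun α : ℝ => ENNReal.ofReal (K * α ^ (-p))) atTop (𝓝 0) := by
    simpa using ENNReal.tendsto_ofReal ((tendsto_rpow_neg_atTop hp0).const_mul K)
  exact ae_iff.2 (le_antisymm
    (ge_of_tendsto hlim ((eventually_gt_atTop 0).mono hbound)) zero_le)

end WeakLp

theorem statement7_general (n : ℕ) (p : ℝ) (hp0 : 0 < p) (hp1 : p < 1)
    (w : Rn n → ℝ)
    (f : ℤ → Rn n → ℝ) (hfm : ∀ j, Measurable (f j))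
    (hf : ∀ j : ℤ, ∀ a : ℝ, 0 < a → wm w {x | a < |f j x|} ≤ ENNReal.ofReal (a ^ (-p)))
    (lam : ℤ → ℝ) (hsum : Summable fun j => |lam j| ^ p)
    (hle : (∑' j : ℤ, |lam j| ^ p) ≤ 1) :
    (∀ᵐ x ∂(wm w), Summable fun j : ℤ => |lam j * f j x|) ∧
    ∀ a : ℝ, 0 < a →
      wm w {x | a < |∑' j : ℤ, lam j * f j x|} ≤
        ENNReal.ofReal ((2 - p) / (1 - p) * a ^ (-p)) := by
  have hf1 : ∀ j, WeakLpBound (wm w) p 1 (f j) := fun j s hs => by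
    rw [one_mul]
    exact hf j s hs
  have hg : ∀ j, WeakLpBound (wm w) p (ENNReal.ofReal (|lam j| ^ p)) fun x => lam j * f j x :=
    fun j => by simpa only [mul_one] using (hf1 j).const_mul (lam j)
  have hC : ∑' j, ENNReal.ofReal (|lam j| ^ p) ≤ 1 := by
    rw [← ENNReal.ofReal_tsum_of_nonneg (fun j => by positivity) hsum]
    exact ENNReal.ofReal_le_one.2 hle
  have hweak : ∀ a : ℝ, 0 < a → wm w {x | ENNReal.ofReal a < ∑' j, ‖lam j * f j x‖ₑ} ≤
      ENNReal.ofReal ((2 - p) / (1 - p) * a ^ (-p)) := fun a ha =>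
    (measure_ofReal_lt_tsum_enorm_le hg (fun j => (hfm j).const_mul (lam j)) hp1 ha).trans
      (by simpa only [one_mul] using mul_le_mul_left hC _)
  refine ⟨?_, fun a ha => (measure_mono fun x (hx : a < _) => ?_).trans (hweak a ha)⟩
  · filter_upwards [ae_ne_top_of_measure_ofReal_lt_le hp0 hweak] with x hx
    simpa only [Real.norm_eq_abs] using tsum_enorm_ne_top_iff_summable_norm.1 hx
  · calc ENNReal.ofReal a < ENNReal.ofReal |∑' j, lam j * f j x| :=
          (ENNReal.ofReal_lt_ofReal_iff (ha.trans hx)).2 hx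
      _ = ‖∑' j, lam j * f j x‖ₑ := (Real.enorm_eq_ofReal_abs _).symm
      _ ≤ ∑' j, ‖lam j * f j x‖ₑ := enorm_tsum_le_tsum_enorm

/-- superposition principle for weighted weak type estimates. -/
theorem statement7 (n : ℕ) (p : ℝ) (hp0 : 0 < p) (hp1 : p < 1)
    (w : Rn n → ℝ) (hw0 : ∀ x, 0 ≤ w x) (hwl : LocallyIntegrable w volume)
    (f : ℤ → Rn n → ℝ) (hfm : ∀ j, Measurable (f j))
    (hf : ∀ j : ℤ, ∀ a : ℝ, 0 < a → wm w {x | a < |f j x|} ≤ ENNReal.ofReal (a ^ (-p)))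
    (lam : ℤ → ℝ) (hsum : Summable fun j => |lam j| ^ p)
    (hle : (∑' j : ℤ, |lam j| ^ p) ≤ 1) :
    (∀ᵐ x ∂(wm w), Summable fun j : ℤ => |lam j * f j x|) ∧
    ∀ a : ℝ, 0 < a →
      wm w {x | a < |∑' j : ℤ, lam j * f j x|} ≤
        ENNReal.ofReal ((2 - p) / (1 - p) * a ^ (-p)) :=
  statement7_general n p hp0 hp1 w f hfm hf lam hsum hle

end
end

section
/- Let n ≥ 2, 0 < α < 1, p = n/(n+α), and w ∈ A_1. Then there exists a constant C > 0 such that for every cube Q = Q(x₀, r), the function G(x) = r^{n+α}/(|x−x₀|^{n+α}·w(Q)^{1/p}) satisfies λ^p·w({x ∉ 2√n·Q : G(x) > λ}) ≤ C for all λ > 0. -/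
open MeasureTheory Metric Set ENNReal
open scoped Classical

noncomputable section

/-!
Every point of the level set `{G > λ}` lies within distance `R = r (λ w(Q)^{1/p})^{-1/(n+α)}`
of `x₀`, so the level set sits in the cube `Q(x₀, 2R)`. When that set is nonempty, `R > r`, and
the `A_1` condition on `Q(x₀, 2R)` averaged over `Q ⊆ Q(x₀, 2R)` gives the doubling bound
`w(Q(x₀, 2R)) ≤ C (2R/r)^n w(Q)`. By the choice of `R`,
`λ^p (R/r)^n w(Q) = 1`, so `λ^p w({G > λ}) ≤ 2^n C`.
-/

section Cube

variable {n : ℕ}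

lemma cube_eq_preimage_pi (c : Rn n) (s : ℝ) :
    cube c s = (MeasurableEquiv.toLp 2 (Fin n → ℝ)).symm ⁻¹'
      univ.pi fun i => Icc (c i - s / 2) (c i + s / 2) := by
  ext x
  simp only [cube, mem_ofPred_eq, mem_preimage, mem_univ_pi, mem_Icc, abs_sub_le_iff,
    MeasurableEquiv.toLp_symm_apply]
  exact forall_congr' fun i => by constructor <;> rintro ⟨h₁, h₂⟩ <;> constructor <;> linarith

lemma measurableSet_cube (c : Rn n) (s : ℝ) : MeasurableSet (cube c s) := by
  rw [cube_eq_preimage_pi]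
  exact (MeasurableEquiv.toLp 2 (Fin n → ℝ)).symm.measurable
    (MeasurableSet.univ_pi fun _ => measurableSet_Icc)

lemma isCompact_cube (c : Rn n) (s : ℝ) : IsCompact (cube c s) := by
  rw [cube_eq_preimage_pi]
  exact (PiLp.continuousLinearEquiv 2 ℝ (fun _ : Fin n => ℝ)).toHomeomorph.isCompact_preimage.2
    (isCompact_univ_pi fun _ => isCompact_Icc)

lemma volume_cube (c : Rn n) (s : ℝ) : volume (cube c s) = ENNReal.ofReal s ^ n := by
  rw [cube_eq_preimage_pi,
    (EuclideanSpace.volume_preserving_symm_measurableEquiv_toLp (Fin n)).measure_preimage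
      (MeasurableSet.univ_pi fun _ => measurableSet_Icc).nullMeasurableSet,
    volume_pi_pi]
  simp [Real.volume_Icc]

lemma toReal_volume_cube (c : Rn n) {s : ℝ} (hs : 0 ≤ s) : (volume (cube c s)).toReal = s ^ n := by
  rw [volume_cube, ← ENNReal.ofReal_pow hs, ENNReal.toReal_ofReal (by positivity)]

lemma cube_subset_cube (c : Rn n) {r s : ℝ} (h : r ≤ s) : cube c r ⊆ cube c s :=
  fun _ hx i => (hx i).trans (by linarith)

lemma ball_subset_cube (c : Rn n) (R : ℝ) : ball c R ⊆ cube c (2 * R) := fun x hx i => by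
  have hxi : |x i - c i| ≤ dist x c := PiLp.dist_apply_le x c i
  linarith [mem_ball.1 hx]

lemma lt_dist_of_notMem_cube {c x : Rn n} {s : ℝ} (h : x ∉ cube c (2 * s)) : s < dist x c := by
  simp only [cube, mem_ofPred_eq, not_forall, not_le, mul_div_cancel_left₀ s two_ne_zero] at h
  obtain ⟨i, hi⟩ := h
  exact hi.trans_le (PiLp.dist_apply_le x c i)

lemma pos_of_notMem_cube {c x : Rn n} {s : ℝ} (h : x ∉ cube c s) : 0 < n := by
  simp only [cube, mem_ofPred_eq, not_forall] at h
  obtain ⟨i, -⟩ := h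
  exact i.pos

lemma wm_cube {w : Rn n → ℝ} (hw0 : ∀ x, 0 ≤ w x) (hloc : LocallyIntegrable w volume)
    (c : Rn n) (s : ℝ) : wm w (cube c s) = ENNReal.ofReal (∫ y in cube c s, w y) := by
  rw [wm, withDensity_apply _ (measurableSet_cube c s),
    ofReal_integral_eq_lintegral_ofReal (hloc.integrableOn_isCompact (isCompact_cube c s))
      (Filter.Eventually.of_forall hw0)]

end Cube

lemma IsA1.exists_integral_cube_le {n : ℕ} {w : Rn n → ℝ} (hw : IsA1 w) :
    ∃ C > 0, ∀ (c : Rn n) (r s : ℝ), 0 < r → r ≤ s →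
      ∫ y in cube c s, w y ≤ C * (s / r) ^ n * ∫ y in cube c r, w y := by
  obtain ⟨-, hloc, C, hC, hA1⟩ := hw
  refine ⟨C, hC, fun c r s hr hrs => ?_⟩
  have hs : 0 < s := hr.trans_le hrs
  set Is := ∫ y in cube c s, w y
  have hae : ∀ᵐ y ∂volume.restrict (cube c r), (s ^ n)⁻¹ * Is ≤ C * w y := by
    simpa only [toReal_volume_cube c hs.le] using
      ae_restrict_of_ae_restrict_of_subset (cube_subset_cube c hrs) (hA1 c s hs)
  have havg : r ^ n * ((s ^ n)⁻¹ * Is) ≤ C * ∫ y in cube c r, w y := calc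
    r ^ n * ((s ^ n)⁻¹ * Is) = ∫ _ in cube c r, (s ^ n)⁻¹ * Is := by
      rw [setIntegral_const, measureReal_def, toReal_volume_cube c hr.le, smul_eq_mul]
    _ ≤ ∫ y in cube c r, C * w y :=
      integral_mono_ae (integrableOn_const (by simp [volume_cube]))
        ((hloc.integrableOn_isCompact (isCompact_cube c r)).const_mul C) hae
    _ = C * ∫ y in cube c r, w y := integral_const_mul C _
  calc Is = (s / r) ^ n * (r ^ n * ((s ^ n)⁻¹ * Is)) := by rw [div_pow]; field_simp
    _ ≤ (s / r) ^ n * (C * ∫ y in cube c r, w y) := by gcongr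
    _ = C * (s / r) ^ n * ∫ y in cube c r, w y := by ring

lemma lt_mul_rpow_of_lt_div_rpow {q r t lam A : ℝ} (hq : 0 < q) (hr : 0 < r) (ht : 0 ≤ t)
    (hlam : 0 < lam) (hA : 0 < A) (h : lam < r ^ q / (t ^ q * A)) :
    t < r * (lam * A) ^ (-1 / q) := by
  have hd : 0 < t ^ q * A := (div_pos_iff_of_pos_left (Real.rpow_pos_of_pos hr q)).1 (hlam.trans h)
  have hK : 0 < lam * A := by positivity
  rw [lt_div_iff₀ hd] at h
  rw [← Real.rpow_lt_rpow_iff ht (by positivity) hq, Real.mul_rpow hr.le (by positivity),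
    ← Real.rpow_mul hK.le, div_mul_cancel₀ _ hq.ne', Real.rpow_neg_one, ← div_eq_mul_inv,
    lt_div_iff₀ hK]
  linarith

lemma rpow_mul_rpow_neg_pow_mul_eq_one {n : ℕ} {q lam W : ℝ} (hn : 0 < n) (hq : 0 < q)
    (hlam : 0 < lam) (hW : 0 < W) :
    lam ^ (n / q) * ((lam * W ^ (q / n)) ^ (-1 / q)) ^ n * W = 1 := by
  have hn' : (n : ℝ) ≠ 0 := by positivity
  rw [← Real.rpow_natCast, ← Real.rpow_mul (by positivity), Real.mul_rpow hlam.le (by positivity),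
    ← Real.rpow_mul hW.le, show q / n * (-1 / q * n) = -1 by field_simp,
    show -1 / q * n = -(n / q) by ring, Real.rpow_neg hlam.le, Real.rpow_neg_one]
  field_simp

theorem statement12_general (n : ℕ) (α : ℝ) (hα0 : 0 < α)
    (w : Rn n → ℝ) (hw : IsA1 w) :
    ∃ C > 0, ∀ (x₀ : Rn n) (r : ℝ), 0 < r → ∀ lam : ℝ, 0 < lam →
      ENNReal.ofReal (lam ^ ((n : ℝ) / (n + α))) *
        wm w {x | x ∉ cube x₀ (2 * Real.sqrt n * r) ∧
          lam < r ^ ((n : ℝ) + α) /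
            (‖x - x₀‖ ^ ((n : ℝ) + α) * (∫ y in cube x₀ r, w y) ^ (((n : ℝ) + α) / n))} ≤
        ENNReal.ofReal C := by
  obtain ⟨C, hC, hdoubling⟩ := hw.exists_integral_cube_le
  refine ⟨C * 2 ^ n, by positivity, fun x₀ r hr lam hlam => ?_⟩
  set q : ℝ := n + α
  set W := ∫ y in cube x₀ r, w y
  set S := {x | x ∉ cube x₀ (2 * Real.sqrt n * r) ∧ lam < r ^ q / (‖x - x₀‖ ^ q * W ^ (q / n))}
  rcases S.eq_empty_or_nonempty with hS | ⟨z, hz_out, hz⟩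
  · simp [hS]
  have hn : 0 < n := pos_of_notMem_cube hz_out
  have hq : 0 < q := by positivity
  have hW : 0 < W := by
    have hd := (div_pos_iff_of_pos_left (by positivity)).1 (hlam.trans hz)
    have hW0 : 0 ≤ W := setIntegral_nonneg (measurableSet_cube x₀ r) fun x _ => hw.1 x
    refine hW0.lt_of_ne' fun h => ?_
    rw [h, Real.zero_rpow (by positivity), mul_zero] at hd
    exact hd.false
  set R := r * (lam * W ^ (q / n)) ^ (-1 / q)
  have hSR : S ⊆ cube x₀ (2 * R) := fun x hx => ball_subset_cube x₀ R <| mem_ball_iff_norm.2 <|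
    lt_mul_rpow_of_lt_div_rpow hq hr (norm_nonneg _) hlam (by positivity) hx.2
  have hrR : r ≤ 2 * R := by
    have hsqrt : 1 ≤ Real.sqrt n := Real.one_le_sqrt.2 (by exact_mod_cast hn)
    have hzR : dist z x₀ < R := mem_ball_iff_norm.2 <|
      lt_mul_rpow_of_lt_div_rpow hq hr (norm_nonneg _) hlam (by positivity) hz
    nlinarith [lt_dist_of_notMem_cube (by rwa [mul_assoc] at hz_out)]
  calc ENNReal.ofReal (lam ^ (n / q)) * wm w S
      ≤ ENNReal.ofReal (lam ^ (n / q)) * wm w (cube x₀ (2 * R)) := by gcongr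
    _ = ENNReal.ofReal (lam ^ (n / q) * ∫ y in cube x₀ (2 * R), w y) := by
      rw [wm_cube hw.1 hw.2.1, ENNReal.ofReal_mul (by positivity)]
    _ ≤ ENNReal.ofReal (lam ^ (n / q) * (C * (2 * R / r) ^ n * W)) := by
      gcongr
      exact hdoubling x₀ r (2 * R) hr hrR
    _ = ENNReal.ofReal (C * 2 ^ n) := by
      have hRr : 2 * R / r = 2 * (lam * W ^ (q / n)) ^ (-1 / q) := by
        simp only [R]; field_simp
      rw [hRr, mul_pow]
      congr 1
      linear_combination C * 2 ^ n * rpow_mul_rpow_neg_pow_mul_eq_one hn hq hlam hW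

/-- weak type estimate for `G(x) = r^{n+α}/(|x−x₀|^{n+α} w(Q)^{1/p})`
outside `2√n Q`, with `p = n/(n+α)` and `w ∈ A_1`. -/
theorem statement12 (n : ℕ) (hn : 2 ≤ n) (α : ℝ) (hα0 : 0 < α) (hα1 : α < 1)
    (w : Rn n → ℝ) (hw : IsA1 w) :
    ∃ C > 0, ∀ (x₀ : Rn n) (r : ℝ), 0 < r → ∀ lam : ℝ, 0 < lam →
      ENNReal.ofReal (lam ^ ((n : ℝ) / (n + α))) *
        wm w {x | x ∉ cube x₀ (2 * Real.sqrt n * r) ∧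
          lam < r ^ ((n : ℝ) + α) /
            (‖x - x₀‖ ^ ((n : ℝ) + α) * (∫ y in cube x₀ r, w y) ^ (((n : ℝ) + α) / n))} ≤
        ENNReal.ofReal C :=
  statement12_general n α hα0 w hw
end
end
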